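/- arXiv:1106.2204 — 7 statements merged into one kernel-verified Lean document; each statement's English description precedes it below -/
import Mathlib

section
/- Let S be a join semilattice with least element 0 and let M be a set of operators on S. The map sending a congruence θ of (S,∨,0,M) to the relation θ ∩ ≤ (its intersection with the partial order of S) is an order isomorphism from Con(S,∨,0,M) onto Eon(S,∨,0,M), both ordered by inclusion. -/
universe u

/-- An operator on a join semilattice with least element 0: a map preserving
binary joins and 0. -/
def IsOperator {S : Type u} [SemilatticeSup S] [OrderBot S] (f : S → S) : Prop :=
  (∀ x y : S, f (x ⊔ y) = f x ⊔ f y) ∧ f ⊥ = ⊥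

/-- A congruence of `(S,∨,0,M)`: an equivalence relation compatible with joins
and with every operator in `M`. -/
def IsCong {S : Type u} [SemilatticeSup S] (M : Set (S → S)) (θ : S → S → Prop) : Prop :=
  Equivalence θ ∧ (∀ x y s : S, θ x y → θ (x ⊔ s) (y ⊔ s)) ∧
    (∀ f ∈ M, ∀ x y : S, θ x y → θ (f x) (f y))

/-- An eon-relation of `(S,∨,0,M)`: a reflexive, transitive relation compatible
with the operations, contained in `≤`, and such that `x ≤ y ≤ z` and `x R z`
imply `x R y`. -/
def IsEon {S : Type u} [SemilatticeSup S] (M : Set (S → S)) (R : S → S → Prop) : Prop :=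
  Reflexive R ∧ Transitive R ∧
    (∀ x y x' y' : S, R x y → R x' y' → R (x ⊔ x') (y ⊔ y')) ∧
    (∀ f ∈ M, ∀ x y : S, R x y → R (f x) (f y)) ∧
    (∀ x y : S, R x y → x ≤ y) ∧
    (∀ x y z : S, x ≤ y → y ≤ z → R x z → R x y)

section Helpers

variable {S : Type u} [SemilatticeSup S] [OrderBot S] {M : Set (S → S)}

/-- The eon-relation associated to a congruence. -/
def toEonRel (θ : S → S → Prop) : S → S → Prop := fun x y => θ x y ∧ x ≤ y

/-- The congruence associated to an eon-relation. -/
def toCongRel (R : S → S → Prop) : S → S → Prop := fun x y => R x (x ⊔ y) ∧ R y (x ⊔ y)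

lemma operator_mono (hM : ∀ f ∈ M, IsOperator f) {f : S → S} (hf : f ∈ M)
    {x y : S} (h : x ≤ y) : f x ≤ f y := by
  have := (hM f hf).1 x y
  rw [sup_eq_right.mpr h] at this
  exact le_sup_left.trans this.ge

lemma toEonRel_isEon (hM : ∀ f ∈ M, IsOperator f) {θ : S → S → Prop}
    (hθ : IsCong M θ) : IsEon M (toEonRel θ) := by
  obtain ⟨heq, hsup, hop⟩ := hθ
  refine ⟨fun x => ⟨heq.refl x, le_rfl⟩,
    fun x y z h1 h2 => ⟨heq.trans h1.1 h2.1, h1.2.trans h2.2⟩,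
    fun x y x' y' h1 h2 => ⟨?_, sup_le_sup h1.2 h2.2⟩,
    fun f hf x y h => ⟨hop f hf x y h.1, operator_mono hM hf h.2⟩,
    fun x y h => h.2,
    fun x y z hxy hyz h => ⟨?_, hxy⟩⟩
  · have a := hsup x y x' h1.1
    have b := hsup x' y' y h2.1
    rw [sup_comm x' y, sup_comm y' y] at b
    exact heq.trans a b
  · -- θ x z, x ≤ y ≤ z ⇒ θ x y
    have a := hsup x z y h.1
    rw [sup_eq_right.mpr hxy, sup_eq_left.mpr hyz] at a
    exact heq.trans h.1 (heq.symm a)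

lemma toCongRel_isCong (hM : ∀ f ∈ M, IsOperator f) {R : S → S → Prop} (hR : IsEon M R) : IsCong M (toCongRel R) := by
  obtain ⟨hrefl, htrans, hsup, hop, hle, hint⟩ := hR
  have symm : ∀ x y : S, toCongRel R x y → toCongRel R y x := by
    intro x y h
    exact ⟨by rw [sup_comm]; exact h.2, by rw [sup_comm]; exact h.1⟩
  refine ⟨⟨fun x => ⟨by rw [sup_idem]; exact hrefl x, by rw [sup_idem]; exact hrefl x⟩,
    fun {x y} h => symm x y h, ?_⟩, ?_, ?_⟩
  · rintro x y z ⟨h1, h2⟩ ⟨h3, h4⟩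
    have hx : R x (x ⊔ y ⊔ z) := by
      refine htrans h1 ?_
      have := hsup x x y (y ⊔ z) (hrefl x) h3
      rwa [← sup_assoc] at this
    have hz : R z (x ⊔ y ⊔ z) := by
      refine htrans h4 ?_
      exact hsup y (x ⊔ y) z z h2 (hrefl z)
    have hxyz1 : x ⊔ z ≤ x ⊔ y ⊔ z :=
      sup_le_sup (le_sup_left : x ≤ x ⊔ y) le_rfl
    exact ⟨hint x (x ⊔ z) (x ⊔ y ⊔ z) le_sup_left hxyz1 hx,
      hint z (x ⊔ z) (x ⊔ y ⊔ z) le_sup_right hxyz1 hz⟩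
  · rintro x y s ⟨h1, h2⟩
    have key : (x ⊔ s) ⊔ (y ⊔ s) = (x ⊔ y) ⊔ s := by
      rw [sup_sup_sup_comm, sup_idem]
    constructor
    · have := hsup x (x ⊔ y) s s h1 (hrefl s)
      rwa [← key] at this
    · have := hsup y (x ⊔ y) s s h2 (hrefl s)
      rwa [← key] at this
  · rintro f hf x y ⟨h1, h2⟩
    have hfj := hM f hf |>.1 x y
    exact ⟨by rw [← hfj]; exact hop f hf _ _ h1, by rw [← hfj]; exact hop f hf _ _ h2⟩

lemma toCongRel_toEonRel {θ : S → S → Prop} (hθ : IsCong M θ) :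
    toCongRel (toEonRel θ) = θ := by
  obtain ⟨heq, hsup, hop⟩ := hθ
  funext x y
  apply propext
  constructor
  · rintro ⟨⟨h1, _⟩, ⟨h2, _⟩⟩
    exact heq.trans h1 (heq.symm h2)
  · intro h
    have hy : θ (x ⊔ y) y := by
      have := hsup x y y h
      rwa [sup_idem] at this
    exact ⟨⟨heq.trans h (heq.symm hy), le_sup_left⟩, ⟨heq.symm hy, le_sup_right⟩⟩

lemma toEonRel_toCongRel {R : S → S → Prop} (hR : IsEon M R) :
    toEonRel (toCongRel R) = R := by
  obtain ⟨hrefl, htrans, hsup, hop, hle, hint⟩ := hR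
  funext x y
  apply propext
  constructor
  · rintro ⟨⟨h1, _⟩, hxy⟩
    rwa [sup_eq_right.mpr hxy] at h1
  · intro h
    have hxy := hle x y h
    rw [toEonRel, toCongRel]
    rw [sup_eq_right.mpr hxy]
    exact ⟨⟨h, hrefl y⟩, hxy⟩

lemma toEonRel_le_iff {θ θ' : S → S → Prop} (hθ : IsCong M θ) (hθ' : IsCong M θ') :
    toEonRel θ ≤ toEonRel θ' ↔ θ ≤ θ' := by
  constructor
  · intro h x y hxy
    have hy : θ y (x ⊔ y) := by
      have := hθ.2.1 x y y hxy
      rw [sup_idem] at this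
      exact hθ.1.symm this
    have hx : θ x (x ⊔ y) := hθ.1.trans hxy hy
    have h1 : toEonRel θ' x (x ⊔ y) := h x (x ⊔ y) ⟨hx, le_sup_left⟩
    have h2 : toEonRel θ' y (x ⊔ y) := h y (x ⊔ y) ⟨hy, le_sup_right⟩
    exact hθ'.1.trans h1.1 (hθ'.1.symm h2.1)
  · intro h x y hxy
    exact ⟨h x y hxy.1, hxy.2⟩

end Helpers

/-- For a join semilattice `S` with least element `0` and a set `M`
of operators on `S`, the map sending a congruence `θ` of `(S,∨,0,M)` to `θ ∩ ≤` is
an order isomorphism from `Con(S,∨,0,M)` onto `Eon(S,∨,0,M)`, both ordered by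
inclusion. -/
theorem con_orderIso_eon {S : Type u} [SemilatticeSup S] [OrderBot S] (M : Set (S → S))
    (hM : ∀ f ∈ M, IsOperator f) :
    ∃ e : {θ : S → S → Prop // IsCong M θ} ≃o {R : S → S → Prop // IsEon M R},
      ∀ θ : {θ : S → S → Prop // IsCong M θ},
        (e θ : S → S → Prop) = fun x y => θ.1 x y ∧ x ≤ y := by
  refine ⟨⟨⟨fun θ => ⟨toEonRel θ.1, toEonRel_isEon hM θ.2⟩,
    fun R => ⟨toCongRel R.1, toCongRel_isCong hM R.2⟩,
    fun θ => Subtype.ext (toCongRel_toEonRel θ.2),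
    fun R => Subtype.ext (toEonRel_toCongRel R.2)⟩, ?_⟩, fun θ => rfl⟩
  rintro ⟨θ, hθ⟩ ⟨θ', hθ'⟩
  exact toEonRel_le_iff hθ hθ'
end

section
/- Let S be a join semilattice with least element 0, let c < d in S, and let ⟨c,d⟩ denote the principal eon-relation generated by (c,d), i.e., the least element of Eon(S,∨,0) containing the pair (c,d). Then for all a ≤ b in S: (a,b) ∈ ⟨c,d⟩ if and only if a = b, or (a < b, a ≥ c, and a ∨ d ≥ b). -/
universe u

/-- An eon-relation of `(S,∨,0)` (no operators): reflexive, transitive,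
compatible with join, contained in `≤`, and such that `x ≤ y ≤ z` and `x R z`
imply `x R y`. -/
def IsEon0 {S : Type u} [SemilatticeSup S] (R : S → S → Prop) : Prop :=
  Reflexive R ∧ Transitive R ∧
    (∀ x y x' y' : S, R x y → R x' y' → R (x ⊔ x') (y ⊔ y')) ∧
    (∀ x y : S, R x y → x ≤ y) ∧
    (∀ x y z : S, x ≤ y → y ≤ z → R x z → R x y)

/-- `P` is the principal eon-relation generated by `(c,d)`: the least element of
`Eon(S,∨,0)` containing the pair `(c,d)`. -/
def IsPrincipalEon {S : Type u} [SemilatticeSup S] (c d : S) (P : S → S → Prop) : Prop :=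
  IsEon0 P ∧ P c d ∧ ∀ R : S → S → Prop, IsEon0 R → R c d → ∀ x y, P x y → R x y

/-- Let `S` be a join semilattice with least element `0`, let `c < d`
in `S`, and let `⟨c,d⟩` denote the principal eon-relation generated by `(c,d)`.
Then for all `a ≤ b` in `S`: `(a,b) ∈ ⟨c,d⟩` iff `a = b`, or (`a < b`, `a ≥ c`,
and `a ∨ d ≥ b`). -/
theorem principalEon_mem_iff {S : Type u} [SemilatticeSup S] [OrderBot S]
    {c d : S} (hcd : c < d) {P : S → S → Prop} (hP : IsPrincipalEon c d P) :
    ∀ a b : S, a ≤ b → (P a b ↔ a = b ∨ (a < b ∧ c ≤ a ∧ b ≤ a ⊔ d)) := by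
  obtain ⟨⟨hrefl, htrans, hjoin, hle, hmid⟩, hPcd, hmin⟩ := hP
  set R : S → S → Prop := fun x y => x ≤ y ∧ (x = y ∨ (c ≤ x ∧ y ≤ x ⊔ d)) with hR
  have hReon : IsEon0 R := by
    refine ⟨fun x => ⟨le_rfl, Or.inl rfl⟩, ?_, ?_, fun x y h => h.1, ?_⟩
    · rintro x y z ⟨hxy, h1⟩ ⟨hyz, h2⟩
      refine ⟨hxy.trans hyz, ?_⟩
      rcases h1 with rfl | ⟨hcx, hyd⟩
      · exact h2
      rcases h2 with rfl | ⟨hcy, hzd⟩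
      · exact Or.inr ⟨hcx, hyd⟩
      · exact Or.inr ⟨hcx, hzd.trans (sup_le (hyd.trans (sup_le le_sup_left le_sup_right)) le_sup_right)⟩
    · rintro x y x' y' ⟨hxy, h1⟩ ⟨hxy', h2⟩
      refine ⟨sup_le_sup hxy hxy', ?_⟩
      have hyd : y ≤ x ⊔ d := by
        rcases h1 with rfl | ⟨_, h⟩
        · exact le_sup_left
        · exact h
      have hyd' : y' ≤ x' ⊔ d := by
        rcases h2 with rfl | ⟨_, h⟩
        · exact le_sup_left
        · exact h
      have hsup : y ⊔ y' ≤ (x ⊔ x') ⊔ d :=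
        sup_le (hyd.trans (sup_le (le_sup_left.trans le_sup_left) le_sup_right))
          (hyd'.trans (sup_le (le_sup_right.trans le_sup_left) le_sup_right))
      rcases h1 with rfl | ⟨hcx, _⟩
      · rcases h2 with rfl | ⟨hcx', _⟩
        · exact Or.inl rfl
        · exact Or.inr ⟨hcx'.trans le_sup_right, hsup⟩
      · exact Or.inr ⟨hcx.trans le_sup_left, hsup⟩
    · rintro x y z hxy hyz ⟨hxz, h⟩
      refine ⟨hxy, ?_⟩
      rcases h with rfl | ⟨hcx, hzd⟩
      · exact Or.inl (le_antisymm hxy hyz)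
      · exact Or.inr ⟨hcx, hyz.trans hzd⟩
  have hRcd : R c d := ⟨hcd.le, Or.inr ⟨le_rfl, le_sup_right⟩⟩
  intro a b hab
  constructor
  · intro hPab
    have := hmin R hReon hRcd a b hPab
    rcases this.2 with rfl | ⟨hca, hbd⟩
    · exact Or.inl rfl
    · rcases eq_or_lt_of_le hab with rfl | hlt
      · exact Or.inl rfl
      · exact Or.inr ⟨hlt, hca, hbd⟩
  · rintro (rfl | ⟨hlt, hca, hbd⟩)
    · exact hrefl a
    · have h1 : P (a ⊔ c) (a ⊔ d) := hjoin a a c d (hrefl a) hPcd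
      have h2 : a ⊔ c = a := sup_eq_left.mpr hca
      rw [h2] at h1
      exact hmid a b (a ⊔ d) hab hbd h1
end

section
/- Let S be a join semilattice with least element 0, let a < b in S, and let c_j < d_j (j = 1,…,n) be finitely many pairs in S. Then ⟨a,b⟩ is contained in the join (in the complete lattice Eon(S,∨,0)) of the principal eon-relations ⟨c_j,d_j⟩ if and only if there exists a finite sequence e_1 < f_1 = e_2 < f_2 = e_3 < ⋯ < f_k in S such that a ≥ e_1, for every i there exists j with e_i ≥ c_j and e_i ∨ d_j ≥ f_i, and a ∨ f_k ≥ b. -/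
universe u

/-- `J` is the join, in the complete lattice `Eon(S,∨,0)`, of the principal
eon-relations `⟨c j, d j⟩`: the least eon-relation containing every pair
`(c j, d j)`. -/
def IsJoinOfPrincipalEons {S : Type u} [SemilatticeSup S] {n : ℕ}
    (c d : Fin n → S) (J : S → S → Prop) : Prop :=
  IsEon0 J ∧ (∀ j, J (c j) (d j)) ∧
    ∀ R : S → S → Prop, IsEon0 R → (∀ j, R (c j) (d j)) → ∀ x y, J x y → R x y

section Aux

variable {S : Type u} [SemilatticeSup S] {n : ℕ} (c d : Fin n → S)

/-- Auxiliary (weak, `ℕ`-indexed) chain relation. -/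
def EonChain (x y : S) : Prop :=
  ∃ k, 0 < k ∧ ∃ g : ℕ → S, g 0 ≤ x ∧
    (∀ i < k, ∃ j, c j ≤ g i ∧ g i ≤ g (i + 1) ∧ g (i + 1) ≤ g i ⊔ d j) ∧
    y ≤ x ⊔ g k

variable {c d}

lemma EonChain.sup {x y : S} (u : S) (h : EonChain c d x y) :
    EonChain c d (u ⊔ x) (u ⊔ y) := by
  obtain ⟨k, hk, g, hg0, hs, hy⟩ := h
  refine ⟨k, hk, fun i => u ⊔ g i, sup_le_sup_left hg0 u, ?_, ?_⟩
  · intro i hi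
    obtain ⟨j, h1, h2, h3⟩ := hs i hi
    exact ⟨j, h1.trans le_sup_right, sup_le_sup_left h2 u,
      sup_le (le_sup_left.trans le_sup_left)
        (h3.trans (sup_le_sup_right le_sup_right _))⟩
  · calc u ⊔ y ≤ u ⊔ (x ⊔ g k) := sup_le_sup_left hy u
    _ = (u ⊔ x) ⊔ g k := by rw [sup_assoc]
    _ ≤ (u ⊔ x) ⊔ (u ⊔ g k) := sup_le_sup_left le_sup_right _

lemma EonChain.trans {x y z : S} (h1 : EonChain c d x y) (h2 : EonChain c d y z) :
    EonChain c d x z := by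
  obtain ⟨k, hk, g, hg0, hs, hy⟩ := h1
  obtain ⟨k', hk', g', hg0', hs', hz⟩ := h2
  set G : ℕ → S := fun i => if i ≤ k then x ⊔ g i else x ⊔ g k ⊔ g' (i - k) with hG
  have hEq : ∀ i, k ≤ i → G i = x ⊔ g k ⊔ g' (i - k) := by
    intro i hi
    rcases eq_or_lt_of_le hi with h | h
    · subst h
      have : g' 0 ≤ x ⊔ g k := hg0'.trans hy
      simp only [hG, if_pos le_rfl, Nat.sub_self]
      exact (sup_eq_left.mpr this).symm
    · have hni : ¬ i ≤ k := by omega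
      simp only [hG, if_neg hni]
  refine ⟨k + k', by omega, G, ?_, ?_, ?_⟩
  · simp only [hG, if_pos (Nat.zero_le k)]
    exact sup_le le_rfl hg0
  · intro i hi
    by_cases hik : i < k
    · obtain ⟨j, h1, h2, h3⟩ := hs i hik
      simp only [hG, if_pos (le_of_lt hik), if_pos (by omega : i + 1 ≤ k)]
      exact ⟨j, h1.trans le_sup_right, sup_le_sup_left h2 x,
        sup_le (le_sup_left.trans le_sup_left)
          (h3.trans (sup_le_sup_right le_sup_right _))⟩
    · have hki : k ≤ i := le_of_not_gt hik
      obtain ⟨j, h1, h2, h3⟩ := hs' (i - k) (by omega)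
      rw [hEq i hki, hEq (i + 1) (by omega), (by omega : i + 1 - k = (i - k) + 1)]
      exact ⟨j, h1.trans le_sup_right, sup_le_sup_left h2 _,
        sup_le (le_sup_left.trans le_sup_left)
          (h3.trans (sup_le_sup_right le_sup_right _))⟩
  · rw [hEq (k + k') (by omega), (by omega : k + k' - k = k')]
    calc z ≤ y ⊔ g' k' := hz
    _ ≤ (x ⊔ g k) ⊔ g' k' := sup_le_sup_right hy _
    _ ≤ x ⊔ ((x ⊔ g k) ⊔ g' k') := le_sup_right

/-- The closure relation: reflexive-or-chain. -/
def EonR (c d : Fin n → S) (x y : S) : Prop :=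
  x ≤ y ∧ (x = y ∨ EonChain c d x y)

lemma isEon0_EonR : IsEon0 (EonR c d) := by
  refine ⟨fun x => ⟨le_rfl, Or.inl rfl⟩, ?_, ?_, fun x y h => h.1, ?_⟩
  · rintro x y z ⟨hxy, H1⟩ ⟨hyz, H2⟩
    refine ⟨hxy.trans hyz, ?_⟩
    rcases H1 with rfl | C1
    · exact H2
    rcases H2 with rfl | C2
    · exact Or.inr C1
    · exact Or.inr (C1.trans C2)
  · rintro x y x' y' ⟨hxy, H1⟩ ⟨hx'y', H2⟩
    refine ⟨sup_le_sup hxy hx'y', ?_⟩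
    rcases H1 with rfl | C1
    · rcases H2 with rfl | C2
      · exact Or.inl rfl
      · exact Or.inr (C2.sup x)
    · rcases H2 with rfl | C2
      · have := C1.sup x'
        rw [sup_comm x' x, sup_comm x' y] at this
        exact Or.inr this
      · have hA := C1.sup x'
        have hB := C2.sup y
        rw [sup_comm y x'] at hB
        have := hA.trans hB
        rw [sup_comm x' x] at this
        exact Or.inr this
  · rintro x y z hxy hyz ⟨hxz, H⟩
    refine ⟨hxy, ?_⟩
    rcases H with rfl | C
    · exact Or.inl (le_antisymm hxy hyz)
    · obtain ⟨k, hk, g, hg0, hs, hzk⟩ := C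
      exact Or.inr ⟨k, hk, g, hg0, hs, hyz.trans hzk⟩

lemma EonR_cd (hcd : ∀ j, c j < d j) (j : Fin n) : EonR c d (c j) (d j) := by
  refine ⟨(hcd j).le, Or.inr ⟨1, one_pos, fun i => if i = 0 then c j else d j, ?_, ?_, ?_⟩⟩
  · simp
  · intro i hi
    interval_cases i
    exact ⟨j, by simp [(hcd j).le]⟩
  · simp

end Aux

/-- Let `S` be a join semilattice with least element `0`, let
`a < b` in `S`, and let `c_j < d_j` (`j = 1,…,n`) be finitely many pairs in `S`.
Then `⟨a,b⟩` is contained in the join (in `Eon(S,∨,0)`) of the `⟨c_j,d_j⟩` iff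
there is a finite sequence `e_1 < f_1 = e_2 < f_2 = e_3 < ⋯ < f_k` in `S` such
that `a ≥ e_1`, for every `i` there is `j` with `e_i ≥ c_j` and
`e_i ∨ d_j ≥ f_i`, and `a ∨ f_k ≥ b`. -/
theorem principalEon_le_join_iff {S : Type u} [SemilatticeSup S] [OrderBot S]
    {a b : S} (hab : a < b) {n : ℕ} {c d : Fin n → S} (hcd : ∀ j, c j < d j)
    {P : S → S → Prop} (hP : IsPrincipalEon a b P)
    {J : S → S → Prop} (hJ : IsJoinOfPrincipalEons c d J) :
    (∀ x y : S, P x y → J x y) ↔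
      ∃ (k : ℕ) (hk : 0 < k) (e f : Fin k → S),
        (∀ i, e i < f i) ∧
        (∀ (i : Fin k) (h : i.1 + 1 < k), f i = e ⟨i.1 + 1, h⟩) ∧
        e ⟨0, hk⟩ ≤ a ∧
        (∀ i, ∃ j, c j ≤ e i ∧ f i ≤ e i ⊔ d j) ∧
        b ≤ a ⊔ f ⟨k - 1, Nat.sub_lt hk Nat.one_pos⟩ := by
  constructor
  · -- forward direction
    intro h
    have hJab : J a b := h a b hP.2.1
    have hRab : EonR c d a b :=
      hJ.2.2 (EonR c d) isEon0_EonR (EonR_cd hcd) a b hJab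
    obtain ⟨-, H⟩ := hRab
    rcases H with rfl | C
    · exact absurd rfl hab.ne
    obtain ⟨k, hk, g, hg0, hs, hb⟩ := C
    -- extract a strict chain from the weak one
    have key : ∀ m, m ≤ k → g m ≤ a ∨ ∃ k', 0 < k' ∧ ∃ e f : ℕ → S,
        (∀ i < k', e i < f i) ∧ (∀ i, i + 1 < k' → f i = e (i + 1)) ∧ e 0 ≤ a ∧
        (∀ i < k', ∃ j, c j ≤ e i ∧ f i ≤ e i ⊔ d j) ∧ g m ≤ f (k' - 1) := by
      intro m
      induction m with
      | zero => intro _; exact Or.inl hg0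
      | succ m ih =>
        intro hm
        have hm' : m < k := hm
        obtain ⟨j, hcj, hmono, hub⟩ := hs m hm'
        rcases ih (le_of_lt hm') with hle | ⟨k', hk', e, f, hsf, hcont, he0, hcov, hlast⟩
        · by_cases hn : g (m + 1) ≤ a
          · exact Or.inl hn
          · right
            refine ⟨1, one_pos, fun _ => g m, fun _ => g (m + 1), ?_, ?_, hle, ?_, le_rfl⟩
            · intro i _
              show g m < g (m + 1)
              exact lt_of_le_of_ne hmono (fun hgm => hn (hgm.symm.trans_le hle))
            · intro i hi; omega
            · intro i _; exact ⟨j, hcj, hub⟩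
        · by_cases hn : g (m + 1) ≤ f (k' - 1)
          · exact Or.inr ⟨k', hk', e, f, hsf, hcont, he0, hcov, hn⟩
          · right
            refine ⟨k' + 1, by omega,
              fun i => if i < k' then e i else f (k' - 1),
              fun i => if i < k' then f i else f (k' - 1) ⊔ g (m + 1), ?_, ?_, ?_, ?_, ?_⟩
            · intro i hi
              by_cases hik : i < k'
              · simpa [hik] using hsf i hik
              · simp only [if_neg hik]
                exact left_lt_sup.mpr hn
            · intro i hi
              have hi2 : i < k' := by omega
              by_cases hik : i + 1 < k'
              · simp only [if_pos hi2, if_pos hik]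
                exact hcont i hik
              · have : i = k' - 1 := by omega
                subst this
                simp only [if_pos hi2, if_neg hik]
            · simpa [hk'] using he0
            · intro i hi
              by_cases hik : i < k'
              · simpa [hik] using hcov i hik
              · simp only [if_neg hik]
                refine ⟨j, hcj.trans hlast, sup_le le_sup_left (hub.trans ?_)⟩
                exact sup_le (hlast.trans le_sup_left) le_sup_right
            · simp only [Nat.add_sub_cancel, if_neg (lt_irrefl k')]
              exact le_sup_right
    rcases key k le_rfl with hle | ⟨k', hk', e, f, hsf, hcont, he0, hcov, hlast⟩
    · exact absurd (hb.trans (sup_le le_rfl hle)) hab.not_ge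
    · refine ⟨k', hk', fun i => e i.1, fun i => f i.1, fun i => hsf i.1 i.2,
        fun i h => hcont i.1 h, he0, fun i => hcov i.1 i.2, ?_⟩
      exact hb.trans (sup_le_sup_left hlast a)
  · -- backward direction
    rintro ⟨k, hk, e, f, hstrict, hcont, he0, hcov, hb⟩
    obtain ⟨Jref, Jtrans, Jsup, Jle, Jdown⟩ := hJ.1
    have Jcd := hJ.2.1
    have hstep : ∀ i : Fin k, J (e i) (f i) := by
      intro i
      obtain ⟨j, hc, hf⟩ := hcov i
      have h1 : J (e i ⊔ c j) (e i ⊔ d j) := Jsup _ _ _ _ (Jref _) (Jcd j)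
      rw [sup_eq_left.mpr hc] at h1
      exact Jdown _ _ _ (hstrict i).le hf h1
    have chain : ∀ m, (hm : m < k) → J (e ⟨0, hk⟩) (f ⟨m, hm⟩) := by
      intro m
      induction m with
      | zero => intro hm; exact hstep ⟨0, hm⟩
      | succ m ih =>
        intro hm
        have hm' : m < k := Nat.lt_of_succ_lt hm
        have h1 := ih hm'
        rw [hcont ⟨m, hm'⟩ hm] at h1
        exact Jtrans h1 (hstep ⟨m + 1, hm⟩)
    have h0f : J (e ⟨0, hk⟩) (f ⟨k - 1, Nat.sub_lt hk Nat.one_pos⟩) :=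
      chain (k - 1) (Nat.sub_lt hk Nat.one_pos)
    have h3 : J (a ⊔ e ⟨0, hk⟩) (a ⊔ f ⟨k - 1, Nat.sub_lt hk Nat.one_pos⟩) :=
      Jsup _ _ _ _ (Jref a) h0f
    rw [sup_eq_left.mpr he0] at h3
    have hJab : J a b := Jdown _ _ _ hab.le hb h3
    intro x y hxy
    exact hP.2.2 J hJ.1 hJab x y hxy
end

section
/- Let S be a join semilattice with least element 0 and greatest element 1. Let L_S be the first-order language with one constant symbol e and a unary relation symbol A_a for each a ∈ S, and let B be the theory consisting of: A_a(e) for each a ∈ S; ∀x (A_1(x) → x ≈ e); ∀x (A_a(x) → A_b(x)) whenever a ≥ b in S; and ∀x ((A_{a_1}(x) ∧ ⋯ ∧ A_{a_n}(x)) → A_b(x)) whenever a_1 ∨ ⋯ ∨ a_n ≥ b in S. Then every quasi-identity in the language L_S is equivalent modulo B to a finite set of quasi-identities each containing at most one variable. -/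
open FirstOrder FirstOrder.Language

universe u w

/-- A quasi-identity whose matrix has `n` universally quantified variables:
the universal closure of an implication whose premise is a finite (possibly empty)
conjunction of atomic formulas and whose conclusion is an atomic formula. -/
def IsQuasiIdentityN {L : FirstOrder.Language.{u, u}} (n : ℕ) (σ : L.Sentence) : Prop :=
  ∃ (hyps : List (L.BoundedFormula Empty n)) (concl : L.BoundedFormula Empty n),
    (∀ φ ∈ hyps, φ.IsAtomic) ∧ concl.IsAtomic ∧
      σ = BoundedFormula.alls ((hyps.foldr (· ⊓ ·) ⊤).imp concl)

/-- A quasi-identity. -/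
def IsQuasiIdentity {L : FirstOrder.Language.{u, u}} (σ : L.Sentence) : Prop :=
  ∃ n, IsQuasiIdentityN n σ

/-- Two sets `Φ`, `Ψ` of sentences are equivalent modulo a theory `T₀` if
`T₀ ∪ Φ` and `T₀ ∪ Ψ` have exactly the same models. -/
def EquivModulo {L : FirstOrder.Language.{u, u}} (T₀ Φ Ψ : L.Theory) : Prop :=
  ∀ (M : Type w) [L.Structure M] [Nonempty M], M ⊨ T₀ ∪ Φ ↔ M ⊨ T₀ ∪ Ψ

/-- The language `L_S`, with one constant symbol `e` and a unary relation symbol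
`A_a` for each element `a` of `S`. -/
def LangS (S : Type u) : FirstOrder.Language.{u, u} where
  Functions := fun n => match n with
    | 0 => PUnit
    | _ + 1 => PEmpty
  Relations := fun n => match n with
    | 1 => S
    | _ => PEmpty

/-- The constant term `e`. -/
def eTerm (S : Type u) {α : Type*} : (LangS S).Term α :=
  Constants.term (PUnit.unit : (LangS S).Constants)

/-- The atomic formula `A_a(t)`. -/
def relA {S : Type u} {n : ℕ} (a : S) (t : (LangS S).Term (Empty ⊕ Fin n)) :
    (LangS S).BoundedFormula Empty n :=
  Relations.boundedFormula₁ (show (LangS S).Relations 1 from a) t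

/-- The theory `B`, consisting of: `A_a(e)` for each `a ∈ S`;
`∀x (A_1(x) → x ≈ e)`; `∀x (A_a(x) → A_b(x))` whenever `a ≥ b`; and
`∀x ((A_{a_1}(x) ∧ ⋯ ∧ A_{a_n}(x)) → A_b(x))` whenever `a_1 ∨ ⋯ ∨ a_n ≥ b`. -/
def TheoryB (S : Type u) [SemilatticeSup S] [OrderBot S] [OrderTop S] : (LangS S).Theory :=
  {σ | ∃ a : S, σ = relA a (eTerm S)} ∪
  {((relA (⊤ : S) &0).imp ((&0 : (LangS S).Term (Empty ⊕ Fin 1)).bdEqual (eTerm S))).all} ∪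
  {σ | ∃ a b : S, b ≤ a ∧ σ = ((relA a &0).imp (relA b &0)).all} ∪
  {σ | ∃ (l : List S) (b : S), l ≠ [] ∧ b ≤ l.foldr (· ⊔ ·) ⊥ ∧
    σ = (((l.map (fun a => relA a &0)).foldr (· ⊓ ·) ⊤).imp (relA b &0)).all}

/-!
Every term of `L_S` is a variable or `e`. Given a quasi-identity `σ`, let `≈` be the equivalence
on terms generated by the equations in its premise, and for each variable `xᵢ` let `σᵢ` be the
one-variable quasi-identity obtained by substituting a fresh variable `x` for the `≈`-class of `xᵢ`
and `e` for every other variable; each `σᵢ` is a substitution instance of `σ`. Conversely, if an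
assignment `v` satisfies the premise of `σ`, then so does the assignment that agrees with `v` on
the class of `xᵢ` and sends everything else to `e`, because `B` proves every `A_a(e)`. Applying
`σᵢ` to it settles the conclusion of `σ` at `v`: a relational conclusion `A_b(xᵢ)` is read off
directly, and an equation `s = t` between inequivalent terms forces both sides to equal `e`.
-/

lemma Option.elim_bind {α β γ : Type*} (t : Option α) (f : α → Option β) (e : γ) (w : β → γ) :
    (t.bind f).elim e w = t.elim e fun j => (f j).elim e w := by
  cases t <;> rfl

namespace LangS

variable {S : Type u} {n m : ℕ}

/-- `none` stands for `e`. -/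
def term : Option (Fin n) → (LangS S).Term (Empty ⊕ Fin n)
  | none => eTerm S
  | some i => Term.var (Sum.inr i)

inductive Atom (S : Type u) (n : ℕ) : Type u
  | equal : Option (Fin n) → Option (Fin n) → Atom S n
  | rel : S → Option (Fin n) → Atom S n

def Atom.toFormula : Atom S n → (LangS S).BoundedFormula Empty n
  | .equal s t => (term s).bdEqual (term t)
  | .rel a t => relA a (term t)

def Atom.bind (f : Fin n → Option (Fin m)) : Atom S n → Atom S m
  | .equal s t => .equal (s.bind f) (t.bind f)
  | .rel a t => .rel a (t.bind f)

def quasiIdentity (hyps : List (Atom S n)) (c : Atom S n) : (LangS S).Sentence :=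
  BoundedFormula.alls (((hyps.map Atom.toFormula).foldr (· ⊓ ·) ⊤).imp c.toFormula)

lemma exists_term_eq : ∀ t : (LangS S).Term (Empty ⊕ Fin n), ∃ s, term s = t
  | .var (.inl e) => e.elim
  | .var (.inr i) => ⟨some i, rfl⟩
  | .func (l := 0) PUnit.unit _ => ⟨none, congrArg (Term.func _) (Subsingleton.elim _ _)⟩
  | .func (l := _ + 1) f _ => PEmpty.elim f

lemma Atom.isAtomic_toFormula (A : Atom S n) : A.toFormula.IsAtomic := by
  cases A with
  | equal s t => exact .equal _ _
  | rel a t => exact .rel _ _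

lemma Atom.exists_toFormula_eq {φ : (LangS S).BoundedFormula Empty n} (h : φ.IsAtomic) :
    ∃ A : Atom S n, A.toFormula = φ := by
  cases h with
  | equal t₁ t₂ =>
    obtain ⟨s₁, rfl⟩ := exists_term_eq t₁
    obtain ⟨s₂, rfl⟩ := exists_term_eq t₂
    exact ⟨.equal s₁ s₂, rfl⟩
  | @rel l R ts =>
    match l, R with
    | 1, a =>
      obtain ⟨s, hs⟩ := exists_term_eq (ts 0)
      refine ⟨.rel a s, congrArg (Relations.boundedFormula _) (funext fun i => ?_)⟩
      rw [Subsingleton.elim i 0]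
      exact hs

lemma exists_quasiIdentity_eq {σ : (LangS S).Sentence} (h : IsQuasiIdentityN n σ) :
    ∃ (hyps : List (Atom S n)) (c : Atom S n), quasiIdentity hyps c = σ := by
  obtain ⟨hyps, concl, hhyps, hconcl, rfl⟩ := h
  obtain ⟨c, rfl⟩ := Atom.exists_toFormula_eq hconcl
  suffices ∃ l : List (Atom S n), l.map Atom.toFormula = hyps from
    this.imp fun l hl => ⟨c, by rw [quasiIdentity, hl]⟩
  induction hyps with
  | nil => exact ⟨[], rfl⟩
  | cons φ hyps ih =>
    obtain ⟨A, rfl⟩ := Atom.exists_toFormula_eq (hhyps φ List.mem_cons_self)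
    obtain ⟨l, rfl⟩ := ih fun ψ hψ => hhyps ψ (List.mem_cons_of_mem _ hψ)
    exact ⟨A :: l, rfl⟩

lemma isQuasiIdentityN_quasiIdentity (hyps : List (Atom S n)) (c : Atom S n) :
    IsQuasiIdentityN n (quasiIdentity hyps c) :=
  ⟨_, _, by simpa using fun A _ => A.isAtomic_toFormula, c.isAtomic_toFormula, rfl⟩

section Semantics

def eVal (S : Type u) (M : Type w) [(LangS S).Structure M] : M :=
  Structure.funMap (L := LangS S) (show (LangS S).Functions 0 from PUnit.unit) finZeroElim

variable {M : Type w} [(LangS S).Structure M]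

def HoldsA (a : S) (x : M) : Prop :=
  Structure.RelMap (show (LangS S).Relations 1 from a) ![x]

def Atom.Realize (v : Fin n → M) : Atom S n → Prop
  | .equal s t => s.elim (eVal S M) v = t.elim (eVal S M) v
  | .rel a t => HoldsA a (t.elim (eVal S M) v)

lemma realize_eTerm {α : Type*} (v : α → M) : (eTerm S).realize v = eVal S M :=
  congrArg (Structure.funMap _) (Subsingleton.elim _ _)

lemma realize_term (v₀ : Empty → M) (v : Fin n → M) (t : Option (Fin n)) :
    (term (S := S) t).realize (Sum.elim v₀ v) = t.elim (eVal S M) v := by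
  cases t with
  | none => exact realize_eTerm _
  | some i => rfl

lemma Atom.realize_toFormula (v₀ : Empty → M) (v : Fin n → M) (A : Atom S n) :
    A.toFormula.Realize v₀ v ↔ A.Realize v := by
  cases A with
  | equal s t => simp only [toFormula, BoundedFormula.realize_bdEqual, realize_term]; rfl
  | rel a t => rw [toFormula, relA, BoundedFormula.realize_rel₁, realize_term]; rfl

lemma realize_quasiIdentity (hyps : List (Atom S n)) (c : Atom S n) :
    M ⊨ quasiIdentity hyps c ↔ ∀ v : Fin n → M, (∀ A ∈ hyps, A.Realize v) → c.Realize v := by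
  have realize_foldr_inf (l : List ((LangS S).BoundedFormula Empty n)) (v₀ : Empty → M)
      (v : Fin n → M) : (l.foldr (· ⊓ ·) ⊤).Realize v₀ v ↔ ∀ φ ∈ l, φ.Realize v₀ v := by
    induction l <;> simp [*]
  simp only [quasiIdentity, Sentence.Realize, BoundedFormula.realize_alls,
    BoundedFormula.realize_imp, realize_foldr_inf, List.forall_mem_map, Atom.realize_toFormula]

lemma Atom.realize_bind (f : Fin n → Option (Fin m)) (w : Fin m → M) (A : Atom S n) :
    (A.bind f).Realize w ↔ A.Realize fun j => (f j).elim (eVal S M) w := by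
  cases A <;> simp only [bind, Realize, Option.elim_bind]

lemma realize_quasiIdentity_bind {hyps : List (Atom S n)} {c : Atom S n}
    (h : M ⊨ quasiIdentity hyps c) (f : Fin n → Option (Fin m)) :
    M ⊨ quasiIdentity (hyps.map (Atom.bind f)) (c.bind f) := by
  rw [realize_quasiIdentity] at h ⊢
  intro w hw
  simp only [List.forall_mem_map, Atom.realize_bind] at hw ⊢
  exact h _ hw

lemma holdsA_eVal_of_model_theoryB [SemilatticeSup S] [OrderBot S] [OrderTop S]
    (h : M ⊨ TheoryB S) (a : S) : HoldsA a (eVal S M) := by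
  have hmem : (relA a (eTerm S) : (LangS S).Sentence) ∈ TheoryB S :=
    Or.inl (Or.inl (Or.inl ⟨a, rfl⟩))
  have := BoundedFormula.realize_rel₁.1 (h.realize_of_mem _ hmem)
  rwa [realize_eTerm] at this

end Semantics

section Reduction

open scoped Classical

def Equated (hyps : List (Atom S n)) : Option (Fin n) → Option (Fin n) → Prop :=
  Relation.EqvGen fun s t => Atom.equal s t ∈ hyps

variable {hyps : List (Atom S n)}

lemma Equated.refl (t : Option (Fin n)) : Equated hyps t t := Relation.EqvGen.refl t

lemma Equated.symm {s t : Option (Fin n)} (h : Equated hyps s t) : Equated hyps t s :=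
  Relation.EqvGen.symm _ _ h

lemma Equated.trans {r s t : Option (Fin n)} (h₁ : Equated hyps r s) (h₂ : Equated hyps s t) :
    Equated hyps r t :=
  Relation.EqvGen.trans _ _ _ h₁ h₂

noncomputable def collapse (hyps : List (Atom S n)) (i : Fin n) : Fin n → Option (Fin 1) :=
  fun j => if Equated hyps (some j) (some i) then some 0 else none

noncomputable def localize (hyps : List (Atom S n)) (c : Atom S n) (i : Fin n) :
    (LangS S).Sentence :=
  quasiIdentity (hyps.map (Atom.bind (collapse hyps i))) (c.bind (collapse hyps i))

variable {M : Type w} [(LangS S).Structure M] {v : Fin n → M}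

lemma elim_eq_of_equated (hv : ∀ A ∈ hyps, A.Realize v) {s t : Option (Fin n)}
    (h : Equated hyps s t) : s.elim (eVal S M) v = t.elim (eVal S M) v := by
  induction h with
  | rel s t hst => exact hv _ hst
  | refl => rfl
  | symm _ _ _ ih => exact ih.symm
  | trans _ _ _ _ _ ih₁ ih₂ => exact ih₁.trans ih₂

lemma elim_collapse {i : Fin n} (hi : ¬ Equated hyps none (some i)) (x : M)
    (t : Option (Fin n)) :
    t.elim (eVal S M) (fun j => (collapse hyps i j).elim (eVal S M) fun _ => x) =
      if Equated hyps t (some i) then x else eVal S M := by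
  cases t with
  | none => exact (if_neg hi).symm
  | some j => by_cases h : Equated hyps (some j) (some i) <;> simp [collapse, h]

lemma realize_collapse (hE : ∀ a : S, HoldsA a (eVal S M)) (hv : ∀ A ∈ hyps, A.Realize v)
    {i : Fin n} (hi : ¬ Equated hyps none (some i)) :
    ∀ A ∈ hyps, A.Realize fun j => (collapse hyps i j).elim (eVal S M) fun _ => v i := by
  intro A hA
  cases A with
  | equal s t =>
    have hst : Equated hyps s t := .rel _ _ hA
    have hiff : Equated hyps s (some i) ↔ Equated hyps t (some i) :=
      ⟨hst.symm.trans, hst.trans⟩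
    simp only [Atom.Realize, elim_collapse hi, hiff]
  | rel a t =>
    simp only [Atom.Realize, elim_collapse hi]
    split_ifs with ht
    · rw [show v i = t.elim (eVal S M) v from (elim_eq_of_equated hv ht).symm]
      exact hv _ hA
    · exact hE a

lemma elim_eq_eVal_of_not_equated (hv : ∀ A ∈ hyps, A.Realize v) {s t : Option (Fin n)}
    (hst : ¬ Equated hyps s t)
    (hcollapse : ∀ i, ¬ Equated hyps none (some i) →
      (Atom.equal (S := S) s t).Realize fun j =>
        (collapse hyps i j).elim (eVal S M) fun _ => v i) :
    s.elim (eVal S M) v = eVal S M := by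
  cases s with
  | none => rfl
  | some i =>
    by_cases hi : Equated hyps none (some i)
    · exact (elim_eq_of_equated hv hi).symm
    · have := hcollapse i hi
      rwa [Atom.Realize, elim_collapse hi, elim_collapse hi, if_pos (Equated.refl _),
        if_neg fun h => hst h.symm] at this

lemma realize_quasiIdentity_iff_forall_localize (hE : ∀ a : S, HoldsA a (eVal S M))
    {c : Atom S n} : M ⊨ quasiIdentity hyps c ↔ ∀ i, M ⊨ localize hyps c i := by
  refine ⟨fun h i => realize_quasiIdentity_bind h _, fun h => ?_⟩
  rw [realize_quasiIdentity]
  intro v hv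
  have hcollapse (i : Fin n) (hi : ¬ Equated hyps none (some i)) :
      c.Realize fun j => (collapse hyps i j).elim (eVal S M) fun _ => v i := by
    have := (realize_quasiIdentity _ _).1 (h i) fun _ => v i
    simp only [List.forall_mem_map, Atom.realize_bind] at this
    exact this (realize_collapse hE hv hi)
  cases c with
  | equal s t =>
    by_cases hst : Equated hyps s t
    · exact elim_eq_of_equated hv hst
    · rw [Atom.Realize, elim_eq_eVal_of_not_equated hv hst hcollapse,
        elim_eq_eVal_of_not_equated hv (fun h => hst h.symm)
          fun i hi => (hcollapse i hi).symm]
  | rel b t =>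
    by_cases ht : Equated hyps t none
    · rw [Atom.Realize, elim_eq_of_equated hv ht]
      exact hE b
    · cases t with
      | none => exact absurd (Equated.refl _) ht
      | some i =>
        have hi : ¬ Equated hyps none (some i) := fun h => ht h.symm
        have := hcollapse i hi
        rwa [Atom.Realize, elim_collapse hi, if_pos (Equated.refl _)] at this

end Reduction

end LangS

/-- Let `S` be a join semilattice with least element `0` and
greatest element `1`, and let `B` be the theory above in the language `L_S`.
Then every quasi-identity in the language `L_S` is equivalent modulo `B` to a
finite set of quasi-identities each containing at most one variable. -/
theorem every_quasiIdentity_equiv_one_variable (S : Type u)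
    [SemilatticeSup S] [OrderBot S] [OrderTop S] :
    ∀ σ : (LangS S).Sentence, IsQuasiIdentity σ →
      ∃ Ψ : (LangS S).Theory, Ψ.Finite ∧ (∀ τ ∈ Ψ, ∃ n ≤ 1, IsQuasiIdentityN n τ) ∧
        EquivModulo.{u, w} (TheoryB S) {σ} Ψ := by
  rintro σ ⟨n, hσ⟩
  obtain ⟨hyps, c, rfl⟩ := LangS.exists_quasiIdentity_eq hσ
  refine ⟨Set.range (LangS.localize hyps c), Set.finite_range _, ?_, fun M _ _ => ?_⟩
  · rintro _ ⟨i, rfl⟩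
    exact ⟨1, le_rfl, LangS.isQuasiIdentityN_quasiIdentity _ _⟩
  · rw [Theory.model_union_iff, Theory.model_union_iff, Theory.model_singleton_iff]
    refine and_congr_right fun hB => ?_
    rw [Theory.model_iff, Set.forall_mem_range]
    exact LangS.realize_quasiIdentity_iff_forall_localize
      (LangS.holdsA_eVal_of_model_theoryB hB)
end

section
/- Let S be a join semilattice with least element 0 and greatest element 1, let M be a monoid of operators on S (containing the identity map and closed under composition), and let F be an upward-closed subset of S with 1 ∈ F satisfying: for all f ∈ M, all a, b ∈ F, and all s ∈ S, if f(a) ∨ s ∈ F then f(b) ∨ s ∈ F. Define ψ(F) = {(x,y) ∈ S × S : for all f ∈ M and s ∈ S, f(x) ∨ s ∈ F if and only if f(y) ∨ s ∈ F}. Then ψ(F) is a congruence of (S,∨,0,M), the class of 1 under ψ(F) is exactly F, and every congruence of (S,∨,0,M) whose class of 1 equals F is contained in ψ(F). -/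
universe u

/-- The relation `ψ(F)`. -/
def psiRel {S : Type u} [SemilatticeSup S] (M : Set (S → S)) (F : Set S) :
    S → S → Prop :=
  fun x y => ∀ f ∈ M, ∀ s : S, (f x ⊔ s ∈ F ↔ f y ⊔ s ∈ F)

/-- Let `S` be a join semilattice with `0` and `1`, let `M` be a
monoid of operators on `S`, and let `F` be an upward-closed subset of `S` with
`1 ∈ F` satisfying: for all `f ∈ M`, `a, b ∈ F`, `s ∈ S`, if `f(a) ∨ s ∈ F` then
`f(b) ∨ s ∈ F`.  Then `ψ(F)` is a congruence of `(S,∨,0,M)`, the class of `1`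
under `ψ(F)` is exactly `F`, and every congruence of `(S,∨,0,M)` whose class of
`1` equals `F` is contained in `ψ(F)`. -/
theorem psiRel_cong (S : Type u) [SemilatticeSup S] [OrderBot S] [OrderTop S]
    (M : Set (S → S))
    (hop : ∀ f ∈ M, IsOperator f)
    (hid : id ∈ M)
    (hcomp : ∀ f ∈ M, ∀ g ∈ M, f ∘ g ∈ M)
    (F : Set S)
    (htopF : (⊤ : S) ∈ F)
    (hup : ∀ x y : S, x ≤ y → x ∈ F → y ∈ F)
    (hF : ∀ f ∈ M, ∀ a ∈ F, ∀ b ∈ F, ∀ s : S, f a ⊔ s ∈ F → f b ⊔ s ∈ F) :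
    IsCong M (psiRel M F) ∧
    ({x : S | psiRel M F x ⊤} = F) ∧
    (∀ θ : S → S → Prop, IsCong M θ → {x : S | θ x ⊤} = F →
      ∀ x y : S, θ x y → psiRel M F x y) := by
  refine ⟨⟨⟨fun x f hf s => Iff.rfl,
      fun h f hf s => (h f hf s).symm,
      fun h h' f hf s => (h f hf s).trans (h' f hf s)⟩, ?_, ?_⟩, ?_, ?_⟩
  · -- join compatibility
    intro x y s h f hf t
    have hj := (hop f hf).1
    rw [hj, hj, sup_assoc, sup_assoc]
    exact h f hf (f s ⊔ t)
  · -- operator compatibility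
    intro f hf x y h g hg s
    have : g (f x) ⊔ s ∈ F ↔ g (f y) ⊔ s ∈ F := h (g ∘ f) (hcomp g hg f hf) s
    exact this
  · -- class of ⊤ is F
    ext x
    simp only [Set.mem_setOf_eq]
    constructor
    · intro h
      have := (h id hid ⊥).2
      simp at this
      exact this htopF
    · intro hx f hf s
      exact ⟨fun h => hF f hf x hx ⊤ htopF s h, fun h => hF f hf ⊤ htopF x hx s h⟩
  · -- maximality
    intro θ ⟨heq, hjoin, hopc⟩ hclass x y hxy f hf s
    have h1 : θ (f x ⊔ s) (f y ⊔ s) := hjoin _ _ s (hopc f hf x y hxy)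
    have hmem : ∀ a : S, a ∈ F ↔ θ a ⊤ := fun a => by
      rw [← hclass]; rfl
    constructor
    · intro h
      exact (hmem _).2 (heq.trans (heq.symm h1) ((hmem _).1 h))
    · intro h
      exact (hmem _).2 (heq.trans h1 ((hmem _).1 h))
end

section
/- Let S be a join semilattice with least element 0 and greatest element 1, let M be a monoid of operators on S (containing the identity map and closed under composition), and let F be an upward-closed subset of S with 1 ∈ F satisfying: for all f ∈ M, all a, b ∈ F, and all s ∈ S, if f(a) ∨ s ∈ F then f(b) ∨ s ∈ F. Define φ(F) to be the relation with x φ(F) y iff x = y or there exist a finite sequence x = x_0, x_1, …, x_n = y, operators f_i ∈ M, elements a_i, b_i ∈ F and s_i ∈ S such that x_i = f_i(a_i) ∨ s_i and x_{i+1} = f_i(b_i) ∨ s_i for all i < n; and define ψ(F) = {(x,y) : for all f ∈ M and s ∈ S, f(x) ∨ s ∈ F iff f(y) ∨ s ∈ F}. Then φ(F) is a congruence of (S,∨,0,M) whose class of 1 is exactly F, and for any congruence θ of (S,∨,0,M): the class of 1 under θ equals F if and only if φ(F) ⊆ θ ⊆ ψ(F). -/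
universe u

/-- The relation `φ(F)`: `x φ(F) y` iff `x = y` or there are a finite sequence
`x = x₀, x₁, …, xₙ = y`, operators `fᵢ ∈ M`, elements `aᵢ, bᵢ ∈ F` and `sᵢ ∈ S`
such that `xᵢ = fᵢ(aᵢ) ∨ sᵢ` and `xᵢ₊₁ = fᵢ(bᵢ) ∨ sᵢ`. -/
def phiRel {S : Type u} [SemilatticeSup S] (M : Set (S → S)) (F : Set S) :
    S → S → Prop :=
  fun x y => x = y ∨
    ∃ (n : ℕ) (_ : 0 < n) (xs : Fin (n + 1) → S) (f : Fin n → (S → S))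
      (a b : Fin n → S) (s : Fin n → S),
      xs 0 = x ∧ xs (Fin.last n) = y ∧
      ∀ i : Fin n, f i ∈ M ∧ a i ∈ F ∧ b i ∈ F ∧
        xs i.castSucc = f i (a i) ⊔ s i ∧ xs i.succ = f i (b i) ⊔ s i

/-!
Let `x ~ y` be the one-step relation `x = f a ∨ s`, `y = f b ∨ s` with `f ∈ M` and `a, b ∈ F`;
`φ(F)` is its reflexive-transitive closure. The one-step relation is symmetric and stable under
joins and under `M` (as `M` is closed under composition and its members preserve joins), so its
closure is a congruence. Any congruence whose class of `1` is `F` relates `a, b ∈ F` through `1`,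
hence contains every step and so `φ(F)`; and it lies in `ψ(F)` because its class of `1` is
stable under `f(-) ∨ s`. The hypothesis on `F` says exactly that `F` is closed backwards along
single steps, which makes the `φ(F)`-class of `1` equal to `F`.
-/

open Relation

theorem reflTransGen_iff_exists_fin_chain {α : Type*} {r : α → α → Prop} {x y : α} :
    ReflTransGen r x y ↔ ∃ (n : ℕ) (xs : Fin (n + 1) → α),
      xs 0 = x ∧ xs (Fin.last n) = y ∧ ∀ i : Fin n, r (xs i.castSucc) (xs i.succ) := by
  constructor
  · intro h
    induction h using ReflTransGen.head_induction_on with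
    | refl => exact ⟨0, fun _ => y, rfl, rfl, Fin.elim0⟩
    | head hxz _ ih =>
      obtain ⟨n, xs, h0, hlast, hxs⟩ := ih
      refine ⟨n + 1, Fin.cons _ xs, rfl, by simpa using hlast, Fin.cases ?_ fun i => ?_⟩
      · simpa [h0] using hxz
      · simpa using hxs i
  · rintro ⟨n, xs, rfl, rfl, hxs⟩
    suffices ∀ i : Fin (n + 1), ReflTransGen r (xs 0) (xs i) from this _
    intro i
    induction i using Fin.induction with
    | zero => exact .refl
    | succ i ih => exact ih.tail (hxs i)

section

variable {S : Type u} [SemilatticeSup S] {M : Set (S → S)} {F : Set S}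

theorem isCong_reflTransGen {r : S → S → Prop} [Std.Symm r]
    (hsup : ∀ x y s, r x y → r (x ⊔ s) (y ⊔ s)) (hM : ∀ f ∈ M, ∀ x y, r x y → r (f x) (f y)) :
    IsCong M (ReflTransGen r) :=
  ⟨⟨fun _ => .refl, fun h => symm h, .trans⟩,
    fun _ _ s h => h.lift (· ⊔ s) fun _ _ => hsup _ _ s,
    fun f hf _ _ h => h.lift f fun _ _ => hM f hf _ _⟩

variable (M F) in
def phiStep (x y : S) : Prop :=
  ∃ f ∈ M, ∃ a ∈ F, ∃ b ∈ F, ∃ s : S, x = f a ⊔ s ∧ y = f b ⊔ s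

theorem phiRel_iff_reflTransGen {x y : S} :
    phiRel M F x y ↔ ReflTransGen (phiStep M F) x y := by
  rw [reflTransGen_iff_exists_fin_chain]
  constructor
  · rintro (rfl | ⟨n, -, xs, f, a, b, s, h0, hlast, hxs⟩)
    · exact ⟨0, fun _ => x, rfl, rfl, Fin.elim0⟩
    · refine ⟨n, xs, h0, hlast, fun i => ?_⟩
      obtain ⟨hf, ha, hb, hx, hy⟩ := hxs i
      exact ⟨f i, hf, a i, ha, b i, hb, s i, hx, hy⟩
  · rintro ⟨_ | n, xs, rfl, rfl, hxs⟩
    · exact .inl rfl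
    · choose f hf a ha b hb s hx hy using hxs
      exact .inr ⟨n + 1, n.succ_pos, xs, f, a, b, s, rfl, rfl,
        fun i => ⟨hf i, ha i, hb i, hx i, hy i⟩⟩

instance : Std.Symm (phiStep M F) where
  symm := by
    rintro x y ⟨f, hf, a, ha, b, hb, s, hx, hy⟩
    exact ⟨f, hf, b, hb, a, ha, s, hy, hx⟩

theorem phiStep.sup_right {x y : S} (h : phiStep M F x y) (t : S) :
    phiStep M F (x ⊔ t) (y ⊔ t) := by
  obtain ⟨f, hf, a, ha, b, hb, s, rfl, rfl⟩ := h
  exact ⟨f, hf, a, ha, b, hb, s ⊔ t, sup_assoc .., sup_assoc ..⟩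

theorem phiStep.map (hcomp : ∀ f ∈ M, ∀ g ∈ M, f ∘ g ∈ M) {g : S → S} (hg : g ∈ M)
    (hg_sup : ∀ x y, g (x ⊔ y) = g x ⊔ g y) {x y : S} (h : phiStep M F x y) :
    phiStep M F (g x) (g y) := by
  obtain ⟨f, hf, a, ha, b, hb, s, rfl, rfl⟩ := h
  exact ⟨g ∘ f, hcomp g hg f hf, a, ha, b, hb, g s, hg_sup _ _, hg_sup _ _⟩

theorem isCong_phiRel (hcomp : ∀ f ∈ M, ∀ g ∈ M, f ∘ g ∈ M)
    (hM_sup : ∀ g ∈ M, ∀ x y, g (x ⊔ y) = g x ⊔ g y) : IsCong M (phiRel M F) := by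
  have : phiRel M F = ReflTransGen (phiStep M F) := by
    ext x y
    exact phiRel_iff_reflTransGen
  rw [this]
  exact isCong_reflTransGen (fun _ _ s h => h.sup_right s)
    fun g hg _ _ h => h.map hcomp hg (hM_sup g hg)

theorem mem_of_phiRel
    (hF : ∀ f ∈ M, ∀ a ∈ F, ∀ b ∈ F, ∀ s : S, f a ⊔ s ∈ F → f b ⊔ s ∈ F)
    {x y : S} (h : phiRel M F x y) (hy : y ∈ F) : x ∈ F := by
  rw [phiRel_iff_reflTransGen] at h
  induction h with
  | refl => exact hy
  | tail _ hstep ih =>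
    obtain ⟨f, hf, a, ha, b, hb, s, rfl, rfl⟩ := hstep
    exact ih (hF f hf b hb a ha s hy)

variable [OrderTop S]

theorem phiRel_top_of_mem (hid : id ∈ M) (htop : ⊤ ∈ F) {x : S} (hx : x ∈ F) :
    phiRel M F x ⊤ :=
  phiRel_iff_reflTransGen.2 <| .single
    ⟨id, hid, x, hx, ⊤, htop, x, (sup_idem x).symm, (top_sup_eq x).symm⟩

theorem setOf_phiRel_top (hid : id ∈ M) (htop : ⊤ ∈ F)
    (hF : ∀ f ∈ M, ∀ a ∈ F, ∀ b ∈ F, ∀ s : S, f a ⊔ s ∈ F → f b ⊔ s ∈ F) :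
    {x | phiRel M F x ⊤} = F :=
  Set.ext fun _ => ⟨fun h => mem_of_phiRel hF h htop, phiRel_top_of_mem hid htop⟩

theorem mem_of_psiRel_top (hid : id ∈ M) (htop : ⊤ ∈ F) {x : S} (h : psiRel M F x ⊤) :
    x ∈ F := by
  simpa using (h id hid x).2 (by simpa using htop)

namespace IsCong

variable {θ : S → S → Prop} (hθ : IsCong M θ) (hθF : {x | θ x ⊤} = F)
include hθ hθF

theorem phiStep_le {x y : S} (h : phiStep M F x y) : θ x y := by
  obtain ⟨⟨-, hsymm, htrans⟩, hsup, hM⟩ := hθ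
  obtain ⟨f, hf, a, ha, b, hb, s, rfl, rfl⟩ := h
  rw [← hθF] at ha hb
  exact hsup _ _ s (hM f hf _ _ (htrans ha (hsymm hb)))

theorem phiRel_le {x y : S} (h : phiRel M F x y) : θ x y := by
  rw [phiRel_iff_reflTransGen] at h
  exact reflTransGen_le_of_equivalence_of_le hθ.1 (fun _ _ => hθ.phiStep_le hθF) _ _ h

theorem psiRel_of_rel {x y : S} (h : θ x y) : psiRel M F x y := by
  obtain ⟨⟨-, hsymm, htrans⟩, hsup, hM⟩ := hθ
  intro f hf s
  have hxy := hsup _ _ s (hM f hf _ _ h)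
  rw [← hθF]
  exact ⟨htrans (hsymm hxy), htrans hxy⟩

end IsCong

end

theorem phiRel_psiRel_interval_general (S : Type u) [SemilatticeSup S] [OrderBot S]
    [OrderTop S] (M : Set (S → S))
    (hop : ∀ f ∈ M, IsOperator f)
    (hid : id ∈ M)
    (hcomp : ∀ f ∈ M, ∀ g ∈ M, f ∘ g ∈ M)
    (F : Set S)
    (htopF : (⊤ : S) ∈ F)
    (hF : ∀ f ∈ M, ∀ a ∈ F, ∀ b ∈ F, ∀ s : S, f a ⊔ s ∈ F → f b ⊔ s ∈ F) :
    IsCong M (phiRel M F) ∧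
    ({x : S | phiRel M F x ⊤} = F) ∧
    (∀ θ : S → S → Prop, IsCong M θ →
      ({x : S | θ x ⊤} = F ↔
        ((∀ x y : S, phiRel M F x y → θ x y) ∧
         (∀ x y : S, θ x y → psiRel M F x y)))) := by
  refine ⟨isCong_phiRel hcomp fun g hg => (hop g hg).1, setOf_phiRel_top hid htopF hF,
    fun θ hθ => ⟨fun hθF => ⟨fun _ _ => hθ.phiRel_le hθF, fun _ _ => hθ.psiRel_of_rel hθF⟩,
      fun ⟨hφθ, hθψ⟩ => ?_⟩⟩
  ext x
  exact ⟨fun hx => mem_of_psiRel_top hid htopF (hθψ _ _ hx),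
    fun hx => hφθ _ _ (phiRel_top_of_mem hid htopF hx)⟩

/-- Let `S` be a join semilattice with `0` and `1`, let `M` be a
monoid of operators on `S`, and let `F` be an upward-closed subset of `S` with
`1 ∈ F` satisfying: for all `f ∈ M`, `a, b ∈ F`, `s ∈ S`, if `f(a) ∨ s ∈ F` then
`f(b) ∨ s ∈ F`.  Then `φ(F)` is a congruence of `(S,∨,0,M)` whose class of `1` is
exactly `F`, and for any congruence `θ` of `(S,∨,0,M)`: the class of `1` under
`θ` equals `F` if and only if `φ(F) ⊆ θ ⊆ ψ(F)`. -/
theorem phiRel_psiRel_interval (S : Type u) [SemilatticeSup S] [OrderBot S]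
    [OrderTop S] (M : Set (S → S))
    (hop : ∀ f ∈ M, IsOperator f)
    (hid : id ∈ M)
    (hcomp : ∀ f ∈ M, ∀ g ∈ M, f ∘ g ∈ M)
    (F : Set S)
    (htopF : (⊤ : S) ∈ F)
    (hup : ∀ x y : S, x ≤ y → x ∈ F → y ∈ F)
    (hF : ∀ f ∈ M, ∀ a ∈ F, ∀ b ∈ F, ∀ s : S, f a ⊔ s ∈ F → f b ⊔ s ∈ F) :
    IsCong M (phiRel M F) ∧
    ({x : S | phiRel M F x ⊤} = F) ∧
    (∀ θ : S → S → Prop, IsCong M θ →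
      ({x : S | θ x ⊤} = F ↔
        ((∀ x y : S, phiRel M F x y → θ x y) ∧
         (∀ x y : S, θ x y → psiRel M F x y)))) :=
  phiRel_psiRel_interval_general S M hop hid hcomp F htopF hF
end

section
/- Define p : ℕ → ℕ by p(0) = 0 and p(n) = n − 1 for n > 0. The set of equivalence relations θ on ℕ such that m θ n implies max(m,s) θ max(n,s) for all s ∈ ℕ and m θ n implies p(m) θ p(n), ordered by inclusion, is order-isomorphic to the ordinal ω + 1, i.e., to the chain ℕ with a greatest element adjoined. -/
/-- The operator `p` on `(ℕ, max, 0)`: `p(0) = 0` and `p(n) = n - 1` for `n > 0`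
(this is truncated predecessor). -/
def pOp : ℕ → ℕ := fun n => n - 1

/-- A congruence of `(ℕ, max, 0, p)`: an equivalence relation compatible with
`max` and with `p`. -/
def IsOmegaCong (θ : ℕ → ℕ → Prop) : Prop :=
  Equivalence θ ∧ (∀ m n s : ℕ, θ m n → θ (max m s) (max n s)) ∧
    (∀ m n : ℕ, θ m n → θ (pOp m) (pOp n))

open Classical in
noncomputable def congOf (k : WithTop ℕ) : ℕ → ℕ → Prop :=
  fun m n => m = n ∨ ((m : WithTop ℕ) ≤ k ∧ (n : WithTop ℕ) ≤ k)

lemma congOf_isCong (k : WithTop ℕ) : IsOmegaCong (congOf k) := by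
  refine ⟨⟨fun n => Or.inl rfl, ?_, ?_⟩, ?_, ?_⟩
  · rintro m n (rfl | ⟨h1, h2⟩)
    · exact Or.inl rfl
    · exact Or.inr ⟨h2, h1⟩
  · rintro a b c (rfl | ⟨h1, h2⟩) h
    · exact h
    · rcases h with rfl | ⟨h3, h4⟩
      · exact Or.inr ⟨h1, h2⟩
      · exact Or.inr ⟨h1, h4⟩
  · rintro m n s (rfl | ⟨h1, h2⟩)
    · exact Or.inl rfl
    · by_cases hs : (s : WithTop ℕ) ≤ k
      · refine Or.inr ⟨?_, ?_⟩
        · rcases max_cases m s with ⟨he, _⟩ | ⟨he, _⟩ <;> rw [he] <;> assumption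
        · rcases max_cases n s with ⟨he, _⟩ | ⟨he, _⟩ <;> rw [he] <;> assumption
      · have hm : m ≤ s := by
          have := lt_of_le_of_lt h1 (lt_of_not_ge hs)
          exact_mod_cast this.le
        have hn : n ≤ s := by
          have := lt_of_le_of_lt h2 (lt_of_not_ge hs)
          exact_mod_cast this.le
        rw [max_eq_right hm, max_eq_right hn]
        exact Or.inl rfl
  · rintro m n (rfl | ⟨h1, h2⟩)
    · exact Or.inl rfl
    · refine Or.inr ⟨?_, ?_⟩
      · exact le_trans (by exact_mod_cast Nat.cast_le.mpr (Nat.sub_le m 1)) h1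
      · exact le_trans (by exact_mod_cast Nat.cast_le.mpr (Nat.sub_le n 1)) h2

section Classify
variable {θ : ℕ → ℕ → Prop} (hθ : IsOmegaCong θ)

include hθ in
lemma cong_step {m n : ℕ} (h : θ m n) (hmn : m < n) : ∀ j < n, θ j (j + 1) := by
  obtain ⟨heq, hmax, hp⟩ := hθ
  have h1 : θ (n - 1) n := by
    have := hmax m n (n - 1) h
    rwa [max_eq_right (by omega), max_eq_left (by omega)] at this
  have key : ∀ t, θ (n - 1 - t) (n - t) := by
    intro t
    induction t with
    | zero => simpa using h1
    | succ t ih =>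
      have := hp _ _ ih
      simp only [pOp] at this
      have e1 : n - 1 - t - 1 = n - 1 - (t + 1) := by omega
      have e2 : n - t - 1 = n - (t + 1) := by omega
      rwa [e1, e2] at this
  intro j hj
  have := key (n - 1 - j)
  have e1 : n - 1 - (n - 1 - j) = j := by omega
  have e2 : n - (n - 1 - j) = j + 1 := by omega
  rwa [e1, e2] at this

include hθ in
lemma cong_zero {m n : ℕ} (h : θ m n) (hmn : m < n) : ∀ j ≤ n, θ 0 j := by
  have step := cong_step hθ h hmn
  intro j hj
  induction j with
  | zero => exact hθ.1.refl 0
  | succ j ih => exact hθ.1.trans (ih (by omega)) (step j (by omega))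

include hθ in
lemma cong_char {m n : ℕ} (h : θ m n) (hmn : m ≠ n) : θ 0 m ∧ θ 0 n := by
  rcases lt_or_gt_of_ne hmn with hlt | hgt
  · exact ⟨cong_zero hθ h hlt m (by omega), cong_zero hθ h hlt n le_rfl⟩
  · have h' := hθ.1.symm h
    exact ⟨cong_zero hθ h' hgt m le_rfl, cong_zero hθ h' hgt n (by omega)⟩

include hθ in
lemma cong_eq_congOf : ∃ k : WithTop ℕ, θ = congOf k := by
  by_cases hall : ∀ n, θ 0 n
  · refine ⟨⊤, ?_⟩
    funext m n
    apply propext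
    constructor
    · intro _; exact Or.inr ⟨le_top, le_top⟩
    · rintro (rfl | _)
      · exact hθ.1.refl m
      · exact hθ.1.trans (hθ.1.symm (hall m)) (hall n)
  · push_neg at hall
    obtain ⟨N, hN⟩ := hall
    have hex : ∃ n, ¬ θ 0 n := ⟨N, hN⟩
    classical
    set N' := Nat.find hex with hN'
    have hspec : ¬ θ 0 N' := Nat.find_spec hex
    have hN'pos : 0 < N' :=
      Nat.pos_of_ne_zero (fun h0 => hspec (by rw [h0]; exact hθ.1.refl 0))
    have hmem : ∀ n, θ 0 n ↔ n < N' := by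
      intro n
      constructor
      · intro h
        by_contra hc
        push_neg at hc
        rcases Nat.eq_or_lt_of_le hc with heq | hlt
        · exact hspec (by rwa [heq])
        · exact hspec (cong_zero hθ h (by omega) N' (by omega))
      · intro h
        by_contra hc
        have := Nat.find_min' hex hc
        omega
    refine ⟨(N' - 1 : ℕ), ?_⟩
    funext m n
    apply propext
    constructor
    · intro h
      by_cases hmn : m = n
      · exact Or.inl hmn
      · obtain ⟨h0m, h0n⟩ := cong_char hθ h hmn
        have hm : m ≤ N' - 1 := by have := (hmem m).mp h0m; omega
        have hn : n ≤ N' - 1 := by have := (hmem n).mp h0n; omega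
        exact Or.inr ⟨by exact_mod_cast hm, by exact_mod_cast hn⟩
    · rintro (rfl | ⟨h1, h2⟩)
      · exact hθ.1.refl m
      · have hm' : m ≤ N' - 1 := by exact_mod_cast h1
        have hn' : n ≤ N' - 1 := by exact_mod_cast h2
        have hm : m < N' := by omega
        have hn : n < N' := by omega
        exact hθ.1.trans (hθ.1.symm ((hmem m).mpr hm)) ((hmem n).mpr hn)

end Classify

lemma congOf_le_iff (j k : WithTop ℕ) : congOf j ≤ congOf k ↔ j ≤ k := by
  constructor
  · intro h
    by_contra hc
    push_neg at hc
    have hk : k ≠ ⊤ := fun ht => by simp [ht] at hc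
    lift k to ℕ using hk with k'
    have hj : ((k' + 1 : ℕ) : WithTop ℕ) ≤ j := by
      by_cases hjt : j = ⊤
      · simp [hjt]
      · lift j to ℕ using hjt with j'
        have h2 : k' < j' := WithTop.coe_lt_coe.mp hc
        rw [Nat.cast_withTop]
        exact WithTop.coe_le_coe.mpr (by omega)
    have hmem : congOf j 0 (k' + 1) := Or.inr ⟨le_trans (by simp) hj, hj⟩
    have := h 0 (k' + 1) hmem
    rcases this with h0 | ⟨_, h2⟩
    · omega
    · have : k' + 1 ≤ k' := WithTop.coe_le_coe.mp h2
      omega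
  · intro h m n
    rintro (rfl | ⟨h1, h2⟩)
    · exact Or.inl rfl
    · exact Or.inr ⟨h1.trans h, h2.trans h⟩

/-- The congruence lattice of `(ℕ, max, 0, p)`, ordered by
inclusion, is order-isomorphic to the ordinal `ω + 1`, i.e. to the chain `ℕ`
with a greatest element adjoined. -/
theorem omegaCong_orderIso_omega_add_one :
    Nonempty ({θ : ℕ → ℕ → Prop // IsOmegaCong θ} ≃o WithTop ℕ) := by
  have hinj : Function.Injective
      (fun k : WithTop ℕ => (⟨congOf k, congOf_isCong k⟩ : {θ : ℕ → ℕ → Prop // IsOmegaCong θ})) := by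
    intro j k h
    have h' : congOf j = congOf k := congrArg Subtype.val h
    exact le_antisymm ((congOf_le_iff j k).mp h'.le) ((congOf_le_iff k j).mp h'.ge)
  have hsurj : Function.Surjective
      (fun k : WithTop ℕ => (⟨congOf k, congOf_isCong k⟩ : {θ : ℕ → ℕ → Prop // IsOmegaCong θ})) := by
    rintro ⟨θ, hθ⟩
    obtain ⟨k, hk⟩ := cong_eq_congOf hθ
    exact ⟨k, by simp [hk]⟩
  let e : WithTop ℕ ≃ {θ : ℕ → ℕ → Prop // IsOmegaCong θ} :=
    Equiv.ofBijective _ ⟨hinj, hsurj⟩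
  refine ⟨(OrderIso.symm { toEquiv := e, map_rel_iff' := ?_ })⟩
  intro j k
  show (⟨congOf j, congOf_isCong j⟩ : {θ : ℕ → ℕ → Prop // IsOmegaCong θ}) ≤
      ⟨congOf k, congOf_isCong k⟩ ↔ j ≤ k
  rw [Subtype.mk_le_mk]
  exact congOf_le_iff j k
end
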